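/- Let m, n be positive integers with 3 | mn and let k be a natural number. If a tromino tiling of the m×n rectangle R(m,n) has the property that every interior horizontal grid line and every interior vertical grid line is crossed by at least k tiles, then 3·k·(m + n − 2) ≤ 2·m·n. -/

import Mathlib

/-- The m×n rectangle: cells {0,…,m−1}×{0,…,n−1}. -/
def rect (m n : ℕ) : Finset (ℕ × ℕ) := Finset.range m ×ˢ Finset.range n

/-- The 2×2 block with top-left corner (i,j). -/
def block (i j : ℕ) : Finset (ℕ × ℕ) :=
  {(i, j), (i, j + 1), (i + 1, j), (i + 1, j + 1)}

/-- An L-tromino: a 2×2 block minus one of its cells. -/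
def IsLTromino (T : Finset (ℕ × ℕ)) : Prop :=
  ∃ i j c, c ∈ block i j ∧ T = block i j \ {c}

/-- A tromino tiling of R(m,n): a partition of the rectangle into L-trominoes. -/
def IsTrominoTiling (m n : ℕ) (𝒯 : Finset (Finset (ℕ × ℕ))) : Prop :=
  (∀ T ∈ 𝒯, IsLTromino T) ∧
  (∀ T₁ ∈ 𝒯, ∀ T₂ ∈ 𝒯, T₁ ≠ T₂ → Disjoint T₁ T₂) ∧
  𝒯.sup id = rect m n

/-- Tile T crosses the i-th horizontal grid line. -/
def CrossesH (T : Finset (ℕ × ℕ)) (i : ℕ) : Prop :=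
  (∃ c ∈ T, c.1 < i) ∧ (∃ c ∈ T, i ≤ c.1)

/-- Tile T crosses the j-th vertical grid line. -/
def CrossesV (T : Finset (ℕ × ℕ)) (j : ℕ) : Prop :=
  (∃ c ∈ T, c.2 < j) ∧ (∃ c ∈ T, j ≤ c.2)

/-- A tiling of R(m,n) is faultfree if every interior horizontal and vertical
grid line is crossed by some tile. -/
def IsFaultfree (m n : ℕ) (𝒯 : Finset (Finset (ℕ × ℕ))) : Prop :=
  (∀ i, 0 < i → i < m → ∃ T ∈ 𝒯, CrossesH T i) ∧
  (∀ j, 0 < j → j < n → ∃ T ∈ 𝒯, CrossesV T j)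

open Classical in
/-- The number of tiles of 𝒯 crossing the i-th horizontal grid line. -/
noncomputable def crossCountH (𝒯 : Finset (Finset (ℕ × ℕ))) (i : ℕ) : ℕ :=
  (𝒯.filter fun T => CrossesH T i).card

open Classical in
/-- The number of tiles of 𝒯 crossing the j-th vertical grid line. -/
noncomputable def crossCountV (𝒯 : Finset (Finset (ℕ × ℕ))) (j : ℕ) : ℕ :=
  (𝒯.filter fun T => CrossesV T j).card

/-! A tromino lies in a 2×2 block, so it crosses at most one horizontal and at most one
vertical grid line. Double counting the pairs (interior line, tile crossing it) therefore
gives k(m − 1) ≤ |𝒯| and k(n − 1) ≤ |𝒯|, while counting cells gives 3|𝒯| = mn. -/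

open Finset

theorem mem_block {a b : ℕ} {c : ℕ × ℕ} :
    c ∈ block a b ↔ (c.1 = a ∨ c.1 = a + 1) ∧ (c.2 = b ∨ c.2 = b + 1) := by
  obtain ⟨x, y⟩ := c
  simp only [block, mem_insert, mem_singleton, Prod.mk.injEq]
  tauto

theorem card_block (a b : ℕ) : #(block a b) = 4 := by
  simp [block, Prod.ext_iff]

theorem CrossesH.eq_of_subset_block {T : Finset (ℕ × ℕ)} {a b i : ℕ}
    (hT : T ⊆ block a b) (h : CrossesH T i) : i = a + 1 := by
  obtain ⟨⟨c, hc, hci⟩, ⟨d, hd, hdi⟩⟩ := h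
  have hc' := (mem_block.1 (hT hc)).1
  have hd' := (mem_block.1 (hT hd)).1
  omega

theorem CrossesV.eq_of_subset_block {T : Finset (ℕ × ℕ)} {a b j : ℕ}
    (hT : T ⊆ block a b) (h : CrossesV T j) : j = b + 1 := by
  obtain ⟨⟨c, hc, hcj⟩, ⟨d, hd, hdj⟩⟩ := h
  have hc' := (mem_block.1 (hT hc)).2
  have hd' := (mem_block.1 (hT hd)).2
  omega

namespace IsLTromino

variable {T : Finset (ℕ × ℕ)}

theorem card_eq_three (h : IsLTromino T) : #T = 3 := by
  obtain ⟨a, b, c, hc, rfl⟩ := h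
  rw [card_sdiff_of_subset (singleton_subset_iff.2 hc), card_block, card_singleton]

theorem crossesH_unique (h : IsLTromino T) {i i' : ℕ} (hi : CrossesH T i)
    (hi' : CrossesH T i') : i = i' := by
  obtain ⟨a, b, c, -, rfl⟩ := h
  rw [hi.eq_of_subset_block sdiff_subset, hi'.eq_of_subset_block sdiff_subset]

theorem crossesV_unique (h : IsLTromino T) {j j' : ℕ} (hj : CrossesV T j)
    (hj' : CrossesV T j') : j = j' := by
  obtain ⟨a, b, c, -, rfl⟩ := h
  rw [hj.eq_of_subset_block sdiff_subset, hj'.eq_of_subset_block sdiff_subset]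

end IsLTromino

theorem IsTrominoTiling.three_mul_card {m n : ℕ} {𝒯 : Finset (Finset (ℕ × ℕ))}
    (h : IsTrominoTiling m n 𝒯) : 3 * #𝒯 = m * n := by
  classical
  obtain ⟨hL, hdisj, hcover⟩ := h
  calc 3 * #𝒯 = ∑ T ∈ 𝒯, #T := by
        rw [sum_congr rfl fun T hT => (hL T hT).card_eq_three, sum_const, smul_eq_mul, mul_comm]
    _ = #(𝒯.biUnion id) := (card_biUnion fun T hT T' hT' hne => hdisj T hT T' hT' hne).symm
    _ = m * n := by rw [← sup_eq_biUnion, hcover, rect, card_product, card_range, card_range]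

theorem mul_le_card_of_le_crossCountH {m k : ℕ} {𝒯 : Finset (Finset (ℕ × ℕ))}
    (hL : ∀ T ∈ 𝒯, IsLTromino T) (hH : ∀ i, 0 < i → i < m → k ≤ crossCountH 𝒯 i) :
    k * (m - 1) ≤ #𝒯 := by
  classical
  have key := card_nsmul_le_card_nsmul (R := ℕ) (s := Ioo 0 m) (t := 𝒯) (m := k) (n := 1)
    (fun i T => CrossesH T i)
    (fun i hi => by
      rw [mem_Ioo] at hi
      exact hH i hi.1 hi.2)
    (fun T hT => card_le_one.2 fun i hi i' hi' =>
      (hL T hT).crossesH_unique (mem_bipartiteBelow _ |>.1 hi).2 (mem_bipartiteBelow _ |>.1 hi').2)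
  simpa only [Nat.card_Ioo, tsub_zero, smul_eq_mul, mul_one, mul_comm] using key

theorem mul_le_card_of_le_crossCountV {n k : ℕ} {𝒯 : Finset (Finset (ℕ × ℕ))}
    (hL : ∀ T ∈ 𝒯, IsLTromino T) (hV : ∀ j, 0 < j → j < n → k ≤ crossCountV 𝒯 j) :
    k * (n - 1) ≤ #𝒯 := by
  classical
  have key := card_nsmul_le_card_nsmul (R := ℕ) (s := Ioo 0 n) (t := 𝒯) (m := k) (n := 1)
    (fun j T => CrossesV T j)
    (fun j hj => by
      rw [mem_Ioo] at hj
      exact hV j hj.1 hj.2)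
    (fun T hT => card_le_one.2 fun j hj j' hj' =>
      (hL T hT).crossesV_unique (mem_bipartiteBelow _ |>.1 hj).2 (mem_bipartiteBelow _ |>.1 hj').2)
  simpa only [Nat.card_Ioo, tsub_zero, smul_eq_mul, mul_one, mul_comm] using key

theorem crossing_number_inequality_general (m n k : ℕ) (𝒯 : Finset (Finset (ℕ × ℕ)))
    (hT : IsTrominoTiling m n 𝒯)
    (hH : ∀ i, 0 < i → i < m → k ≤ crossCountH 𝒯 i)
    (hV : ∀ j, 0 < j → j < n → k ≤ crossCountV 𝒯 j) :
    3 * k * (m + n - 2) ≤ 2 * m * n := by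
  have hrows := mul_le_card_of_le_crossCountH hT.1 hH
  have hcols := mul_le_card_of_le_crossCountV hT.1 hV
  calc 3 * k * (m + n - 2) ≤ 3 * (k * (m - 1) + k * (n - 1)) := by
        rw [← mul_add, ← mul_assoc]
        gcongr
        omega
    _ ≤ 2 * (3 * #𝒯) := by omega
    _ = 2 * m * n := by rw [hT.three_mul_card, mul_assoc]

/-- If every interior grid line of a tromino tiling of R(m,n) is
crossed by at least k tiles, then 3·k·(m + n − 2) ≤ 2·m·n. -/
theorem crossing_number_inequality (m n k : ℕ) (hm : 0 < m) (hn : 0 < n)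
    (h3 : 3 ∣ m * n) (𝒯 : Finset (Finset (ℕ × ℕ)))
    (hT : IsTrominoTiling m n 𝒯)
    (hH : ∀ i, 0 < i → i < m → k ≤ crossCountH 𝒯 i)
    (hV : ∀ j, 0 < j → j < n → k ≤ crossCountV 𝒯 j) :
    3 * k * (m + n - 2) ≤ 2 * m * n :=
  crossing_number_inequality_general m n k 𝒯 hT hH hV
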